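/- arXiv:2505.20602 — 3 statements merged into one kernel-verified Lean document; each statement's English description precedes it below -/
import Mathlib

section
/- Let α_1, …, α_n be nonzero reals, and let B = Σ_{j=1}^n α_j 𝟙_n^j (𝟙_n^j)^T, where 𝟙_n^j ∈ R^n has first j entries equal to 1 and the rest 0. Then B is invertible and its inverse is the symmetric tridiagonal matrix C(α_1,…,α_n) with diagonal entries (α_1^{-1}, α_1^{-1}+α_2^{-1}, …, α_{n-1}^{-1}+α_n^{-1}) and off-diagonal entries (C)_{i,i+1} = (C)_{i+1,i} = −α_i^{-1}. -/
/-!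
With `U` the upper-triangular all-ones matrix and `D = diagonal α`, the matrix `B` is the
congruence `U * D * Uᵀ`, its rank-one terms being the columns of `U` weighted by `α`. The inverse
of `U` is the bidiagonal matrix `1 - S` with `S` the superdiagonal shift, so
`B⁻¹ = (1 - S)ᵀ * D⁻¹ * (1 - S)`, and expanding this product gives the tridiagonal entries of `C`.
-/

open Matrix

theorem Fin.sum_ite_val_add_one_eq {n : ℕ} {M : Type*} [AddCommMonoid M] (j : Fin n)
    (f : Fin n → M) :
    (∑ k : Fin n, if (k : ℕ) + 1 = j then f k else 0) =
      if h : 0 < (j : ℕ) then f ⟨j - 1, by omega⟩ else 0 := by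
  split_ifs with hj
  · rw [Finset.sum_eq_single_of_mem _ (Finset.mem_univ ⟨j - 1, by omega⟩)]
    · rw [if_pos (by simp; omega)]
    · intro k _ hk
      exact if_neg fun h => hk (Fin.ext (by simp; omega))
  · exact Finset.sum_eq_zero fun k _ => if_neg (by omega)

namespace Matrix

variable (n : ℕ) (R : Type*) [Ring R]

def upperOnes : Matrix (Fin n) (Fin n) R := fun i j => if (i : ℕ) ≤ j then 1 else 0

def upShift : Matrix (Fin n) (Fin n) R := fun i j => if (i : ℕ) + 1 = j then 1 else 0

variable {n R}

theorem mul_upShift_apply (A : Matrix (Fin n) (Fin n) R) (i j : Fin n) :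
    (A * upShift n R) i j = if h : 0 < (j : ℕ) then A i ⟨j - 1, by omega⟩ else 0 := by
  simp only [mul_apply, upShift, mul_ite, mul_one, mul_zero]
  exact Fin.sum_ite_val_add_one_eq j (A i)

theorem upperOnes_mul_one_sub_upShift : upperOnes n R * (1 - upShift n R) = 1 := by
  ext i j
  rw [mul_sub, mul_one, sub_apply, mul_upShift_apply, one_apply]
  simp only [upperOnes, Fin.ext_iff]
  split_ifs <;> first | omega | simp

theorem upShift_transpose_mul_diagonal_mul_upShift_apply (d : Fin n → R) (i j : Fin n) :
    ((upShift n R)ᵀ * diagonal d * upShift n R) i j =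
      if i = j ∧ 0 < (i : ℕ) then d ⟨i - 1, by omega⟩ else 0 := by
  rw [mul_upShift_apply]
  simp only [mul_diagonal, transpose_apply, upShift, ite_mul, one_mul, zero_mul, Fin.ext_iff]
  split_ifs <;> first | rfl | omega | (congr 2; omega)

theorem one_sub_upShift_transpose_mul_diagonal_mul_apply (d : Fin n → R) (i j : Fin n) :
    ((1 - upShift n R : Matrix (Fin n) (Fin n) R)ᵀ * diagonal d * (1 - upShift n R)) i j =
      if i = j then (if (i : ℕ) = 0 then d i else d ⟨i - 1, by omega⟩ + d i)
      else if (i : ℕ) + 1 = j then -d i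
      else if (j : ℕ) + 1 = i then -d j
      else 0 := by
  have hexpand : (1 - upShift n R : Matrix (Fin n) (Fin n) R)ᵀ * diagonal d * (1 - upShift n R) =
      diagonal d - diagonal d * upShift n R - (upShift n R)ᵀ * diagonal d +
        (upShift n R)ᵀ * diagonal d * upShift n R := by
    rw [transpose_sub, transpose_one]; noncomm_ring
  rw [hexpand, add_apply, sub_apply, sub_apply, upShift_transpose_mul_diagonal_mul_upShift_apply,
    diagonal_mul, mul_diagonal, transpose_apply, diagonal_apply]
  simp only [upShift, Fin.ext_iff]
  split_ifs <;> first | omega | simp [add_comm]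

theorem sum_smul_vecMulVec_eq_mul_diagonal_mul_transpose {m ι S : Type*} [Fintype ι]
    [DecidableEq ι] [CommSemiring S] (A : Matrix m ι S) (d : ι → S) :
    ∑ j, d j • vecMulVec (fun i => A i j) (fun i => A i j) = A * diagonal d * Aᵀ := by
  ext i k
  rw [sum_apply, mul_apply]
  simp only [smul_apply, vecMulVec_apply, smul_eq_mul, mul_diagonal, transpose_apply]
  exact Finset.sum_congr rfl fun j _ => by ring

end Matrix

theorem stmt4 {n : ℕ} (α : Fin n → ℝ) (hα : ∀ i, α i ≠ 0)
    (B C : Matrix (Fin n) (Fin n) ℝ)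
    (hB : B = ∑ j, α j • Matrix.vecMulVec
        (fun i : Fin n => if (i : ℕ) ≤ (j : ℕ) then (1 : ℝ) else 0)
        (fun i : Fin n => if (i : ℕ) ≤ (j : ℕ) then (1 : ℝ) else 0))
    (hC : ∀ i j : Fin n, C i j =
      if i = j then
        (if (i : ℕ) = 0 then (α i)⁻¹
         else (α ⟨(i : ℕ) - 1, lt_of_le_of_lt (Nat.sub_le _ _) i.isLt⟩)⁻¹ + (α i)⁻¹)
      else if (i : ℕ) + 1 = (j : ℕ) then -(α i)⁻¹
      else if (j : ℕ) + 1 = (i : ℕ) then -(α j)⁻¹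
      else 0) :
    B * C = 1 ∧ C * B = 1 := by
  set U := upperOnes n ℝ
  set E := 1 - upShift n ℝ
  have hB' : B = U * diagonal α * Uᵀ :=
    hB.trans (sum_smul_vecMulVec_eq_mul_diagonal_mul_transpose U α)
  have hC' : C = Eᵀ * diagonal α⁻¹ * E :=
    ext fun i j => (hC i j).trans (one_sub_upShift_transpose_mul_diagonal_mul_apply α⁻¹ i j).symm
  have hEU : E * U = 1 := mul_eq_one_comm.mp upperOnes_mul_one_sub_upShift
  have hαα : diagonal α⁻¹ * diagonal α = 1 := by
    rw [diagonal_mul_diagonal, ← diagonal_one]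
    exact congrArg diagonal (funext fun i => inv_mul_cancel₀ (hα i))
  have hCB : C * B = 1 := calc
    C * B = Eᵀ * diagonal α⁻¹ * (E * U) * diagonal α * Uᵀ := by
      rw [hC', hB']; simp only [Matrix.mul_assoc]
    _ = (U * E)ᵀ := by
      rw [hEU, Matrix.mul_one, Matrix.mul_assoc Eᵀ, hαα, Matrix.mul_one, transpose_mul]
    _ = 1 := by rw [upperOnes_mul_one_sub_upShift, transpose_one]
  exact ⟨mul_eq_one_comm.mpr hCB, hCB⟩
end

section
/- Let x* ∈ R^n, let V ∈ R^{n×k} have full column rank, let d ∈ R^n with d ∉ Range(V), set M = (V, d), and let x ∈ R^n satisfy M^T(x − x*) = γ e_{k+1} for some γ ∈ R. If s solves M^T M s = γ e_{k+1}, then the point x⁺ = x + M s satisfies ‖x⁺ − x*‖_2^2 = ‖x − x*‖_2^2 − γ · s_{k+1}, where s_{k+1} is the last component of s. -/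
/-!
If `Mᵀ (x* - x) = g` and `Mᵀ M s = g`, then `x + M s` is the orthogonal projection of `x*` onto
`x + range M`, so the cross term in `‖(x - x*) + M s‖²` equals `-2 sᵀg` while `‖M s‖² = sᵀg`.
For `g = γ e_{k+1}`, `sᵀg = γ s_{k+1}`.
-/

open Matrix

section

variable {m n R : Type*} [Fintype m] [Fintype n] [CommRing R]

theorem Matrix.add_dotProduct_self (u w : m → R) :
    (u + w) ⬝ᵥ (u + w) = u ⬝ᵥ u + 2 * (u ⬝ᵥ w) + w ⬝ᵥ w := by
  simp only [add_dotProduct, dotProduct_add, dotProduct_comm w u]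
  ring

theorem Matrix.mulVec_dotProduct_self_of_normal_eq (M : Matrix m n R) (s g : n → R)
    (hs : (Mᵀ * M) *ᵥ s = g) : (M *ᵥ s) ⬝ᵥ (M *ᵥ s) = s ⬝ᵥ g := by
  rw [← hs, ← mulVec_mulVec, dotProduct_transpose_mulVec]

theorem Matrix.dotProduct_self_add_mulVec_sub_of_normal_eq (M : Matrix m n R)
    (x xstar : m → R) (s g : n → R) (hx : Mᵀ *ᵥ (xstar - x) = g) (hs : (Mᵀ * M) *ᵥ s = g) :
    (x + M *ᵥ s - xstar) ⬝ᵥ (x + M *ᵥ s - xstar) = (x - xstar) ⬝ᵥ (x - xstar) - s ⬝ᵥ g := by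
  have hcross : (x - xstar) ⬝ᵥ (M *ᵥ s) = -(s ⬝ᵥ g) := by
    rw [← hx, dotProduct_transpose_mulVec, ← neg_sub, neg_dotProduct]
  rw [add_sub_right_comm, add_dotProduct_self, hcross, mulVec_dotProduct_self_of_normal_eq M s g hs]
  ring

end

theorem Matrix.dotProduct_smul_sumElim_zero_one {ι R : Type*} [Fintype ι] [CommRing R]
    (s : ι ⊕ Unit → R) (γ : R) :
    s ⬝ᵥ (γ • Sum.elim (0 : ι → R) (fun _ => (1 : R))) = γ * s (Sum.inr ()) := by
  simp [dotProduct, Fintype.sum_sum_type, mul_comm]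

theorem stmt8_general {n k : ℕ} (xstar x : Fin n → ℝ) (γ : ℝ)
    (M : Matrix (Fin n) (Fin k ⊕ Unit) ℝ)
    (hx : Mᵀ *ᵥ (xstar - x) = γ • Sum.elim (0 : Fin k → ℝ) (fun _ => (1 : ℝ)))
    (s : Fin k ⊕ Unit → ℝ)
    (hs : (Mᵀ * M) *ᵥ s = γ • Sum.elim (0 : Fin k → ℝ) (fun _ => (1 : ℝ))) :
    (x + M *ᵥ s - xstar) ⬝ᵥ (x + M *ᵥ s - xstar) =
      (x - xstar) ⬝ᵥ (x - xstar) - γ * s (Sum.inr ()) := by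
  rw [dotProduct_self_add_mulVec_sub_of_normal_eq M x xstar s _ hx hs,
    dotProduct_smul_sumElim_zero_one]

theorem stmt8 {n k : ℕ} (xstar x : Fin n → ℝ)
    (V : Matrix (Fin n) (Fin k) ℝ) (hV : V.rank = k)
    (d : Fin n → ℝ) (hd : ∀ y, V *ᵥ y ≠ d) (γ : ℝ)
    (M : Matrix (Fin n) (Fin k ⊕ Unit) ℝ)
    (hM : M = Matrix.fromCols V (Matrix.of fun i (_ : Unit) => d i))
    (hx : Mᵀ *ᵥ (xstar - x) = γ • Sum.elim (0 : Fin k → ℝ) (fun _ => (1 : ℝ)))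
    (s : Fin k ⊕ Unit → ℝ)
    (hs : (Mᵀ * M) *ᵥ s = γ • Sum.elim (0 : Fin k → ℝ) (fun _ => (1 : ℝ))) :
    (x + M *ᵥ s - xstar) ⬝ᵥ (x + M *ᵥ s - xstar) =
      (x - xstar) ⬝ᵥ (x - xstar) - γ * s (Sum.inr ()) :=
  stmt8_general xstar x γ M hx s hs
end

section
/- Let x* ∈ R^n and suppose x^{j}, …, x^{k+1} ∈ R^n satisfy: for every i with j ≤ i ≤ k, the point x^{i+1} is the orthogonal projection of x* onto an affine subspace containing both x^i and x^{i+1} and all earlier points x^{j},…,x^{i}. Then for any t < v in {j,…,k+1}, ⟨x^{v} − x*, x^{t} − x^{v}⟩ = 0; consequently the update directions p_t = (x^{t+1} − x^t)/δ_t (with δ_t ≠ 0) satisfy ⟨p_v, p_t⟩ = 0 for all j ≤ t < v ≤ k, i.e., the consecutive update directions within the memory window are mutually orthogonal. -/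
/-!
Each iterate `x v` is the point nearest to `x*` of an affine subspace containing all earlier
iterates, so `x v - x*` is orthogonal to every difference of iterates up to `v`. Writing
`x (v+1) - x v = (x (v+1) - x*) - (x v - x*)` then makes each step orthogonal to all earlier steps.
-/

open scoped InnerProductSpace

section

variable {E : Type*} [NormedAddCommGroup E] [InnerProductSpace ℝ E]

/-- The variational inequality for convex sets, applied to `w` and to its reflection `2v - w`. -/
theorem AffineSubspace.inner_sub_eq_zero_of_forall_norm_le {W : AffineSubspace ℝ E} {u v w : E}
    (hv : v ∈ W) (hw : w ∈ W) (hmin : ∀ y ∈ W, ‖v - u‖ ≤ ‖y - u‖) :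
    ⟪v - u, w - v⟫_ℝ = 0 := by
  have hinf : ‖u - v‖ = ⨅ y : W, ‖u - y‖ := by
    have : Nonempty W := ⟨⟨v, hv⟩⟩
    refine le_antisymm (le_ciInf fun y => ?_) (ciInf_le ⟨0, ?_⟩ (⟨v, hv⟩ : W))
    · simpa only [norm_sub_rev u] using hmin y y.2
    · rintro _ ⟨y, rfl⟩
      exact norm_nonneg _
  have hle := (norm_eq_iInf_iff_real_inner_le_zero W.convex hv).mp hinf
  have hrefl : (-1 : ℝ) • (w -ᵥ v) +ᵥ v ∈ W := W.smul_vsub_vadd_mem _ hw hv hv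
  have h₁ := hle w hw
  have h₂ := hle _ hrefl
  rw [vsub_eq_sub, vadd_eq_add, neg_one_smul, add_sub_cancel_right, inner_neg_right] at h₂
  rw [← neg_sub u v, inner_neg_left]
  linarith

theorem inner_sub_sub_eq_zero {a b c s : E} (hb : ⟪a - s, b - a⟫_ℝ = 0)
    (hc : ⟪a - s, c - a⟫_ℝ = 0) : ⟪a - s, c - b⟫_ℝ = 0 := by
  rw [← sub_sub_sub_cancel_right c b a, inner_sub_right, hb, hc, sub_zero]

end

theorem stmt14_general {n : ℕ} (xstar : EuclideanSpace ℝ (Fin n))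
    (x : ℕ → EuclideanSpace ℝ (Fin n)) (j k : ℕ)
    (hproj : ∀ i, j ≤ i → i ≤ k →
      ∃ W : AffineSubspace ℝ (EuclideanSpace ℝ (Fin n)),
        (∀ t, j ≤ t → t ≤ i → x t ∈ W) ∧ x (i + 1) ∈ W ∧
        ∀ y ∈ W, ‖x (i + 1) - xstar‖ ≤ ‖y - xstar‖)
    (p : ℕ → EuclideanSpace ℝ (Fin n)) (δ : ℕ → ℝ)
    (hδ : ∀ t, j ≤ t → t ≤ k → δ t ≠ 0)
    (hp : ∀ t, j ≤ t → t ≤ k → x (t + 1) = x t + δ t • p t) :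
    (∀ t v, j ≤ t → t < v → v ≤ k + 1 →
      inner ℝ (x v - xstar) (x t - x v) = (0 : ℝ)) ∧
    (∀ t v, j ≤ t → t < v → v ≤ k →
      inner ℝ (p v) (p t) = (0 : ℝ)) := by
  have horth : ∀ t v, j ≤ t → t ≤ v → v ≤ k + 1 → ⟪x v - xstar, x t - x v⟫_ℝ = 0 := by
    intro t v hjt htv hvk
    obtain rfl | htv := htv.eq_or_lt
    · simp
    obtain ⟨i, rfl⟩ : ∃ i, v = i + 1 := ⟨v - 1, by omega⟩
    obtain ⟨W, hW, hWi, hmin⟩ := hproj i (by omega) (by omega)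
    exact AffineSubspace.inner_sub_eq_zero_of_forall_norm_le hWi (hW t hjt (by omega)) hmin
  have hstep : ∀ t v, j ≤ t → t < v → v ≤ k →
      ⟪x (v + 1) - x v, x (t + 1) - x t⟫_ℝ = 0 := by
    intro t v hjt htv hvk
    rw [← sub_sub_sub_cancel_right (x (v + 1)) (x v) xstar, inner_sub_left,
      inner_sub_sub_eq_zero (horth t (v + 1) hjt (by omega) (by omega))
        (horth (t + 1) (v + 1) (by omega) (by omega) (by omega)),
      inner_sub_sub_eq_zero (horth t v hjt htv.le (by omega))
        (horth (t + 1) v (by omega) htv (by omega)), sub_zero]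
  refine ⟨fun t v hjt htv hvk => horth t v hjt htv.le hvk, fun t v hjt htv hvk => ?_⟩
  have h := hstep t v hjt htv hvk
  rw [hp v (by omega) hvk, hp t hjt (by omega), add_sub_cancel_left, add_sub_cancel_left,
    real_inner_smul_left, real_inner_smul_right] at h
  simpa [hδ v (by omega) hvk, hδ t hjt (by omega)] using h

theorem stmt14 {n : ℕ} (xstar : EuclideanSpace ℝ (Fin n))
    (x : ℕ → EuclideanSpace ℝ (Fin n)) (j k : ℕ) (hjk : j ≤ k)
    (hproj : ∀ i, j ≤ i → i ≤ k →
      ∃ W : AffineSubspace ℝ (EuclideanSpace ℝ (Fin n)),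
        (∀ t, j ≤ t → t ≤ i → x t ∈ W) ∧ x (i + 1) ∈ W ∧
        ∀ y ∈ W, ‖x (i + 1) - xstar‖ ≤ ‖y - xstar‖)
    (p : ℕ → EuclideanSpace ℝ (Fin n)) (δ : ℕ → ℝ)
    (hδ : ∀ t, j ≤ t → t ≤ k → δ t ≠ 0)
    (hp : ∀ t, j ≤ t → t ≤ k → x (t + 1) = x t + δ t • p t) :
    (∀ t v, j ≤ t → t < v → v ≤ k + 1 →
      inner ℝ (x v - xstar) (x t - x v) = (0 : ℝ)) ∧
    (∀ t v, j ≤ t → t < v → v ≤ k →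
      inner ℝ (p v) (p t) = (0 : ℝ)) :=
  stmt14_general xstar x j k hproj p δ hδ hp
end
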